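/- With the ICW exchangeable pair construction, E[|1 − (1/(2λ))·E[(X_n − X'_n)² + c·σ²·(X_n − X'_n)·(X̃_n − X̃'_n) | F_n]|] ≤ E[|R_3 + R_4 + R_5 + R̂_3 + R̂_4 + R̂_5|], where R_3 := (1/χ_n)·(1/n)∑_i σ_i·(tanh(t_i*) − tanh((β w_i/E[W_n])·m̃_n^i + h)), R_4 := (1/χ_n)·(1/n)∑_i tanh(t_i*)·(tanh(t_i*) − E_{μ_n}[σ_i]), R_5 := (1/χ_n)·(1/n)∑_i tanh(t_i*)·(E_{μ_n}[σ_i] − σ_i), R̂_3 := (c·σ²/√(χ_n·χ̃_n))·(1/n)∑_i w_i·σ_i·(tanh(t_i*) − tanh((β w_i/E[W_n])·m̃_n^i + h)), R̂_4 := (c·σ²/√(χ_n·χ̃_n))·(1/n)∑_i w_i·tanh(t_i*)·(tanh(t_i*) − E_{μ_n}[σ_i]), R̂_5 := (c·σ²/√(χ_n·χ̃_n))·(1/n)∑_i w_i·tanh(t_i*)·(E_{μ_n}[σ_i] − σ_i). -/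

import Mathlib

open Real BigOperators Finset MeasureTheory Filter ProbabilityTheory Topology

noncomputable section

namespace ICW

/-- The real spin value associated to a Boolean: `true ↦ 1`, `false ↦ -1`. -/
def spin (b : Bool) : ℝ := if b then 1 else -1

/-- `E[W_n^k] = (1/n) ∑_i w_i^k`. -/
def EWk (n : ℕ) (w : Fin n → ℝ) (k : ℕ) : ℝ := (1 / n : ℝ) * ∑ i, (w i) ^ k

/-- `E[W_n] = (1/n) ∑_i w_i`. -/
def EW (n : ℕ) (w : Fin n → ℝ) : ℝ := (1 / n : ℝ) * ∑ i, w i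

/-- The (negative) Hamiltonian of the inhomogeneous Curie–Weiss model. -/
def ham (n : ℕ) (w : Fin n → ℝ) (β h : ℝ) (σ : Fin n → Bool) : ℝ :=
  β / (2 * ∑ i, w i) * (∑ i, w i * spin (σ i)) ^ 2 + h * ∑ i, spin (σ i)

/-- Unnormalized Boltzmann–Gibbs weight. -/
def wt (n : ℕ) (w : Fin n → ℝ) (β h : ℝ) (σ : Fin n → Bool) : ℝ :=
  Real.exp (ham n w β h σ)

/-- Partition function `Z_n`. -/
def Z (n : ℕ) (w : Fin n → ℝ) (β h : ℝ) : ℝ := ∑ σ : Fin n → Bool, wt n w β h σ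

/-- Expectation under the ICW measure `μ_n`. -/
def icwE (n : ℕ) (w : Fin n → ℝ) (β h : ℝ) (f : (Fin n → Bool) → ℝ) : ℝ :=
  (∑ σ : Fin n → Bool, wt n w β h σ * f σ) / Z n w β h

open Classical in
/-- Probability of an event under the ICW measure `μ_n`. -/
def icwP (n : ℕ) (w : Fin n → ℝ) (β h : ℝ) (A : (Fin n → Bool) → Prop) : ℝ :=
  icwE n w β h (fun σ => if A σ then 1 else 0)

/-- Magnetization `m_n`. -/
def mn (n : ℕ) (σ : Fin n → Bool) : ℝ := (1 / n : ℝ) * ∑ i, spin (σ i)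

/-- Weighted magnetization `m̃_n`. -/
def mtil (n : ℕ) (w : Fin n → ℝ) (σ : Fin n → Bool) : ℝ :=
  (1 / n : ℝ) * ∑ i, w i * spin (σ i)

/-- Weighted magnetization leaving out spin `i`, `m̃_n^i`. -/
def mtilI (n : ℕ) (w : Fin n → ℝ) (σ : Fin n → Bool) (i : Fin n) : ℝ :=
  (1 / n : ℝ) * ∑ j ∈ Finset.univ.erase i, w j * spin (σ j)

/-- Argument `√(β/E[W_n])·w_i·x + h`. -/
def arg (n : ℕ) (w : Fin n → ℝ) (β h x : ℝ) (i : Fin n) : ℝ :=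
  Real.sqrt (β / EW n w) * w i * x + h

/-- `G_n(x)`. -/
def Gfun (n : ℕ) (w : Fin n → ℝ) (β h : ℝ) (x : ℝ) : ℝ :=
  x ^ 2 / 2 - (1 / n : ℝ) * ∑ i, Real.log (Real.cosh (arg n w β h x i))

/-- `G_n(x; s)` (with tilted argument `x+s`). -/
def GfunS (n : ℕ) (w : Fin n → ℝ) (β h : ℝ) (x s : ℝ) : ℝ :=
  x ^ 2 / 2 - (1 / n : ℝ) * ∑ i, Real.log (Real.cosh (arg n w β h (x + s) i))

/-- `G_n'(x)`. -/
def Gfun' (n : ℕ) (w : Fin n → ℝ) (β h : ℝ) (x : ℝ) : ℝ :=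
  x - (1 / n : ℝ) * ∑ i, Real.sqrt (β / EW n w) * w i * Real.tanh (arg n w β h x i)

/-- `G_n''(x)`. -/
def Gfun'' (n : ℕ) (w : Fin n → ℝ) (β h : ℝ) (x : ℝ) : ℝ :=
  1 - β / EW n w * ((1 / n : ℝ) * ∑ i, (1 - Real.tanh (arg n w β h x i) ^ 2) * (w i) ^ 2)

/-- `x` has the same sign as `h` (and is `0` when `h = 0`). -/
def SameSign (h x : ℝ) : Prop :=
  (0 < h ∧ 0 < x) ∨ (h < 0 ∧ x < 0) ∨ (h = 0 ∧ x = 0)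

/-- `M_n`, defined from a solution `x` of the fixed point equation. -/
def Mn (n : ℕ) (w : Fin n → ℝ) (β h x : ℝ) : ℝ :=
  (1 / n : ℝ) * ∑ i, Real.tanh (arg n w β h x i)

/-- The susceptibility `χ_n`, defined from a solution `x` of the fixed point equation. -/
def chiN (n : ℕ) (w : Fin n → ℝ) (β h x : ℝ) : ℝ :=
  1 - (1 / n : ℝ) * ∑ i, Real.tanh (arg n w β h x i) ^ 2
    + β / EW n w * ((1 / n : ℝ) * ∑ i, (1 - Real.tanh (arg n w β h x i) ^ 2) * w i) ^ 2
      / Gfun'' n w β h x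

/-- `M̃_n`. -/
def Mtil (n : ℕ) (w : Fin n → ℝ) (β x : ℝ) : ℝ := Real.sqrt (EW n w / β) * x

/-- `χ̃_n`. -/
def chiTil (n : ℕ) (w : Fin n → ℝ) (β h x : ℝ) : ℝ :=
  ((1 / n : ℝ) * ∑ i, (1 - Real.tanh (arg n w β h x i) ^ 2) * (w i) ^ 2) / Gfun'' n w β h x

/-- The normalized magnetization `X_n` (as a function of the configuration),
where `x` is the relevant solution of the fixed point equation. -/
def Xn (n : ℕ) (w : Fin n → ℝ) (β h x : ℝ) (σ : Fin n → Bool) : ℝ :=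
  Real.sqrt n * (mn n σ - Mn n w β h x) / Real.sqrt (chiN n w β h x)

/-- The normalized weighted magnetization `X̃_n`. -/
def Xtil (n : ℕ) (w : Fin n → ℝ) (β h x : ℝ) (σ : Fin n → Bool) : ℝ :=
  Real.sqrt n * (mtil n w σ - Mtil n w β x) / Real.sqrt (chiTil n w β h x)

/-- The standard normal cumulative distribution function. -/
def stdGaussCDF (z : ℝ) : ℝ := ((gaussianReal 0 1) (Set.Iic z)).toReal

/-- Kolmogorov distance between the law of `X` under `μ_n` and the standard normal law. -/
def dK (n : ℕ) (w : Fin n → ℝ) (β h : ℝ) (X : (Fin n → Bool) → ℝ) : ℝ :=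
  ⨆ z : ℝ, |icwP n w β h (fun σ => X σ ≤ z) - stdGaussCDF z|

/-- Weight regularity condition (i): the empirical weight distribution converges weakly to
the law `ν` of `W`, which is a probability measure with `E[W] > 0`. -/
def WeightRegI (w : (n : ℕ) → Fin n → ℝ) (ν : Measure ℝ) : Prop :=
  (∀ n i, 0 < w n i) ∧ IsProbabilityMeasure ν ∧
    (∀ f : BoundedContinuousFunction ℝ ℝ,
      Tendsto (fun n : ℕ => (1 / n : ℝ) * ∑ i, f (w n i)) atTop (𝓝 (∫ x, f x ∂ν))) ∧
    Integrable (fun x => x) ν ∧ 0 < ∫ x, x ∂ν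

/-- Weight regularity condition (ii): `E[W_n²] → E[W²] < ∞`. -/
def WeightRegII (w : (n : ℕ) → Fin n → ℝ) (ν : Measure ℝ) : Prop :=
  Integrable (fun x => x ^ 2) ν ∧
    Tendsto (fun n => EWk n (w n) 2) atTop (𝓝 (∫ x, x ^ 2 ∂ν))

/-- Weight regularity condition (iii): `E[W_n³] → E[W³] < ∞`. -/
def WeightRegIII (w : (n : ℕ) → Fin n → ℝ) (ν : Measure ℝ) : Prop :=
  Integrable (fun x => x ^ 3) ν ∧
    Tendsto (fun n => EWk n (w n) 3) atTop (𝓝 (∫ x, x ^ 3 ∂ν))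

/-- The critical inverse temperature `β_c = E[W]/E[W²]`. -/
def betaC (ν : Measure ℝ) : ℝ := (∫ x, x ∂ν) / (∫ x, x ^ 2 ∂ν)

/-- The uniqueness regime `U`. -/
def Uniq (ν : Measure ℝ) (β h : ℝ) : Prop :=
  (0 ≤ β ∧ h ≠ 0) ∨ (0 < β ∧ β < betaC ν ∧ h = 0)

/-- Probability that spin `i` equals `+1` given the remaining spins. -/
def pPlus (n : ℕ) (w : Fin n → ℝ) (β h : ℝ) (σ : Fin n → Bool) (i : Fin n) : ℝ :=
  wt n w β h (Function.update σ i true) /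
    (wt n w β h (Function.update σ i true) + wt n w β h (Function.update σ i false))

/-- Conditional expectation given `F_n` (the σ-algebra generated by `σ`) of a function of
`(σ, I, σ'_I)`, where `I` is uniform on `[n]` and `σ'_I` is resampled from the conditional
distribution of the `I`-th spin given the others. -/
def condAvg (n : ℕ) (w : Fin n → ℝ) (β h : ℝ)
    (f : (Fin n → Bool) → Fin n → Bool → ℝ) (σ : Fin n → Bool) : ℝ :=
  (1 / n : ℝ) * ∑ i, (pPlus n w β h σ i * f σ i true + (1 - pPlus n w β h σ i) * f σ i false)

/-- The increment `X_n − X'_n` as a function of `(σ, I, σ'_I)`. -/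
def XnD (n : ℕ) (w : Fin n → ℝ) (β h x : ℝ) (σ : Fin n → Bool) (i : Fin n) (b : Bool) : ℝ :=
  (spin (σ i) - spin b) / (Real.sqrt n * Real.sqrt (chiN n w β h x))

/-- The increment `X̃_n − X̃'_n` as a function of `(σ, I, σ'_I)`. -/
def XtilD (n : ℕ) (w : Fin n → ℝ) (β h x : ℝ) (σ : Fin n → Bool) (i : Fin n) (b : Bool) : ℝ :=
  w i * (spin (σ i) - spin b) / (Real.sqrt n * Real.sqrt (chiTil n w β h x))

/-- The constant `c` in the regression equation. -/
def cconst (n : ℕ) (w : Fin n → ℝ) (β h x : ℝ) : ℝ :=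
  Real.sqrt (chiTil n w β h x) / Real.sqrt (chiN n w β h x) * (β / EW n w) *
    ((1 / n : ℝ) * ∑ i, (1 - Real.tanh (arg n w β h x i) ^ 2) * w i)

end ICW

namespace ICW

/-- Error term `R_3`. -/
def R3 (n : ℕ) (w : Fin n → ℝ) (β h x : ℝ) (σ : Fin n → Bool) : ℝ :=
  1 / chiN n w β h x * ((1 / n : ℝ) * ∑ i, spin (σ i) *
    (Real.tanh (arg n w β h x i) - Real.tanh (β * w i / EW n w * mtilI n w σ i + h)))

/-- Error term `R_4`. -/
def R4 (n : ℕ) (w : Fin n → ℝ) (β h x : ℝ) : ℝ :=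
  1 / chiN n w β h x * ((1 / n : ℝ) * ∑ i, Real.tanh (arg n w β h x i) *
    (Real.tanh (arg n w β h x i) - icwE n w β h (fun τ => spin (τ i))))

/-- Error term `R_5`. -/
def R5 (n : ℕ) (w : Fin n → ℝ) (β h x : ℝ) (σ : Fin n → Bool) : ℝ :=
  1 / chiN n w β h x * ((1 / n : ℝ) * ∑ i, Real.tanh (arg n w β h x i) *
    (icwE n w β h (fun τ => spin (τ i)) - spin (σ i)))

/-- Error term `R̂_3`. -/
def Rhat3 (n : ℕ) (w : Fin n → ℝ) (β h x : ℝ) (σ : Fin n → Bool) : ℝ :=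
  cconst n w β h x * (1 / Gfun'' n w β h x) / Real.sqrt (chiN n w β h x * chiTil n w β h x) *
    ((1 / n : ℝ) * ∑ i, w i * spin (σ i) *
      (Real.tanh (arg n w β h x i) - Real.tanh (β * w i / EW n w * mtilI n w σ i + h)))

/-- Error term `R̂_4`. -/
def Rhat4 (n : ℕ) (w : Fin n → ℝ) (β h x : ℝ) : ℝ :=
  cconst n w β h x * (1 / Gfun'' n w β h x) / Real.sqrt (chiN n w β h x * chiTil n w β h x) *
    ((1 / n : ℝ) * ∑ i, w i * Real.tanh (arg n w β h x i) *
      (Real.tanh (arg n w β h x i) - icwE n w β h (fun τ => spin (τ i))))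

/-- Error term `R̂_5`. -/
def Rhat5 (n : ℕ) (w : Fin n → ℝ) (β h x : ℝ) (σ : Fin n → Bool) : ℝ :=
  cconst n w β h x * (1 / Gfun'' n w β h x) / Real.sqrt (chiN n w β h x * chiTil n w β h x) *
    ((1 / n : ℝ) * ∑ i, w i * Real.tanh (arg n w β h x i) *
      (icwE n w β h (fun τ => spin (τ i)) - spin (σ i)))

/-!
The inequality holds with equality, configuration by configuration. Resampling spin `i` from its
conditional law, whose mean is `T_i = tanh` of the local field, gives
`E[(σ_i - σ'_i)² | F_n] = 2 (1 - σ_i T_i)`, so `(n/2) E[… | F_n] = (1/n) ∑ a_i (1 - σ_i T_i)` with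
`a_i = 1/χ_n + K w_i`, `K` the prefactor of the `R̂`'s. The six error terms sum to
`(1/n) ∑ a_i (tanh²(t_i*) - σ_i T_i)`, and the difference `(1/n) ∑ a_i (1 - tanh²(t_i*))` equals `1`
by the definition of `χ_n`.
-/

lemma spin_sq (b : Bool) : spin b ^ 2 = 1 := by cases b <;> norm_num [spin]

lemma tanh_sq_lt_one (y : ℝ) : Real.tanh y ^ 2 < 1 := by
  nlinarith [Real.tanh_lt_one y, Real.neg_one_lt_tanh y]

lemma two_mul_exp_div_exp_add_exp_sub_one (a b : ℝ) :
    2 * (Real.exp a / (Real.exp a + Real.exp b)) - 1 = Real.tanh ((a - b) / 2) := by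
  have hsplit : ∀ s, Real.exp ((a + b) / 2 + s) = Real.exp ((a + b) / 2) * Real.exp s :=
    fun s => Real.exp_add _ _
  have ha : Real.exp a = Real.exp ((a + b) / 2) * Real.exp ((a - b) / 2) := by
    rw [← hsplit]; ring_nf
  have hb : Real.exp b = Real.exp ((a + b) / 2) * Real.exp (-((a - b) / 2)) := by
    rw [← hsplit]; ring_nf
  rw [Real.tanh_eq, ha, hb]
  have : 0 < Real.exp ((a - b) / 2) + Real.exp (-((a - b) / 2)) := by positivity
  field_simp
  ring

lemma sum_mul_spin_update {n : ℕ} (c : Fin n → ℝ) (σ : Fin n → Bool) (i : Fin n) (b : Bool) :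
    ∑ j, c j * spin (Function.update σ i b j)
      = c i * spin b + ∑ j ∈ univ.erase i, c j * spin (σ j) := by
  rw [← add_sum_erase _ _ (mem_univ i), Function.update_self]
  congr 1
  exact sum_congr rfl fun j hj => by rw [Function.update_of_ne (ne_of_mem_erase hj)]

def localField (n : ℕ) (w : Fin n → ℝ) (β h : ℝ) (σ : Fin n → Bool) (i : Fin n) : ℝ :=
  β * w i / EW n w * mtilI n w σ i + h

lemma ham_update_true_sub_false {n : ℕ} {w : Fin n → ℝ} (hL : ∑ j, w j ≠ 0) (β h : ℝ)
    (σ : Fin n → Bool) (i : Fin n) :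
    ham n w β h (Function.update σ i true) - ham n w β h (Function.update σ i false)
      = 2 * localField n w β h σ i := by
  have hn : (n : ℝ) ≠ 0 := Nat.cast_ne_zero.mpr (Fin.pos i).ne'
  have hspin := sum_mul_spin_update (fun _ => (1 : ℝ)) σ i
  simp only [one_mul] at hspin
  rw [ham, ham, sum_mul_spin_update w, sum_mul_spin_update w, hspin, hspin]
  simp only [localField, EW, mtilI, spin, if_true, Bool.false_eq_true, if_false]
  field_simp
  ring

lemma two_mul_pPlus_sub_one {n : ℕ} {w : Fin n → ℝ} (hL : ∑ j, w j ≠ 0) (β h : ℝ)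
    (σ : Fin n → Bool) (i : Fin n) :
    2 * pPlus n w β h σ i - 1 = Real.tanh (localField n w β h σ i) := by
  rw [pPlus, wt, wt, two_mul_exp_div_exp_add_exp_sub_one, ham_update_true_sub_false hL,
    mul_div_cancel_left₀ _ two_ne_zero]

/-- Since `(s - b)² = 2 - 2 s b` for spins, only the conditional mean `tanh` of the resampled
spin enters. -/
lemma condAvg_spin_sub_sq_mul {n : ℕ} {w : Fin n → ℝ} (hL : ∑ j, w j ≠ 0) (β h : ℝ)
    (r : Fin n → ℝ) (σ : Fin n → Bool) :
    condAvg n w β h (fun τ i b => (spin (τ i) - spin b) ^ 2 * r i) σ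
      = (1 / n : ℝ) * ∑ i, 2 * (1 - spin (σ i) * Real.tanh (localField n w β h σ i)) * r i := by
  refine congrArg _ (sum_congr rfl fun i _ => ?_)
  have hs := spin_sq (σ i)
  have hp := two_mul_pPlus_sub_one hL β h σ i
  beta_reduce
  rw [show spin true = 1 from rfl, show spin false = -1 from rfl]
  linear_combination r i * hs - 2 * spin (σ i) * r i * hp

section SteinTerm

variable {n : ℕ} {w : Fin n → ℝ} {β h x : ℝ}

lemma EW_pos (hn : 0 < n) (hw : ∀ i, 0 < w i) : 0 < EW n w :=
  mul_pos (by positivity) (sum_pos (fun i _ => hw i) ⟨⟨0, hn⟩, mem_univ _⟩)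

lemma avg_tanh_sq_lt_one (hn : 0 < n) (t : Fin n → ℝ) :
    (1 / n : ℝ) * ∑ i, Real.tanh (t i) ^ 2 < 1 := by
  have hn' : (0 : ℝ) < n := Nat.cast_pos.mpr hn
  calc (1 / n : ℝ) * ∑ i, Real.tanh (t i) ^ 2
      < (1 / n : ℝ) * ∑ _i : Fin n, 1 := by
        gcongr with i
        · exact ⟨⟨0, hn⟩, mem_univ _⟩
        · exact tanh_sq_lt_one _
    _ = 1 := by simp [hn'.ne']

lemma chiN_pos (hn : 0 < n) (hw : ∀ i, 0 < w i) (hβ : 0 < β) (hG : 0 < Gfun'' n w β h x) :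
    0 < chiN n w β h x := by
  have hQ := avg_tanh_sq_lt_one hn (arg n w β h x)
  have hEW := EW_pos hn hw
  unfold chiN
  have : 0 ≤ β / EW n w *
      ((1 / n : ℝ) * ∑ i, (1 - Real.tanh (arg n w β h x i) ^ 2) * w i) ^ 2 / Gfun'' n w β h x := by
    positivity
  linarith

lemma chiTil_pos (hn : 0 < n) (hw : ∀ i, 0 < w i) (hG : 0 < Gfun'' n w β h x) :
    0 < chiTil n w β h x := by
  refine div_pos (mul_pos (by positivity) (sum_pos (fun i _ => ?_)
    ⟨⟨0, hn⟩, mem_univ _⟩)) hG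
  exact mul_pos (by linarith [tanh_sq_lt_one (arg n w β h x i)]) (pow_pos (hw i) 2)

def rhatCoeff (n : ℕ) (w : Fin n → ℝ) (β h x : ℝ) : ℝ :=
  cconst n w β h x * (1 / Gfun'' n w β h x) / Real.sqrt (chiN n w β h x * chiTil n w β h x)

lemma chiN_mul_rhatCoeff (hχ : 0 < chiN n w β h x) (hχt : 0 < chiTil n w β h x) :
    chiN n w β h x * rhatCoeff n w β h x
      = β / EW n w * ((1 / n : ℝ) * ∑ i, (1 - Real.tanh (arg n w β h x i) ^ 2) * w i)
        / Gfun'' n w β h x := by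
  have hs := Real.sqrt_pos.mpr hχ
  have hst := Real.sqrt_pos.mpr hχt
  rw [rhatCoeff, cconst, Real.sqrt_mul hχ.le]
  field_simp
  rw [Real.sq_sqrt hχ.le]

def siteCoeff (n : ℕ) (w : Fin n → ℝ) (β h x : ℝ) (i : Fin n) : ℝ :=
  1 / chiN n w β h x + rhatCoeff n w β h x * w i

/-- The correction term in the definition of `χ_n` is exactly what makes this average `1`. -/
lemma avg_siteCoeff_mul_one_sub_tanh_sq (hn : 0 < n) (hχ : 0 < chiN n w β h x)
    (hχt : 0 < chiTil n w β h x) :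
    (1 / n : ℝ) * ∑ i, siteCoeff n w β h x i * (1 - Real.tanh (arg n w β h x i) ^ 2) = 1 := by
  have hn' : (n : ℝ) ≠ 0 := Nat.cast_ne_zero.mpr hn.ne'
  have hsplit : ∑ i, siteCoeff n w β h x i * (1 - Real.tanh (arg n w β h x i) ^ 2)
      = 1 / chiN n w β h x * (n - ∑ i, Real.tanh (arg n w β h x i) ^ 2)
        + rhatCoeff n w β h x * ∑ i, (1 - Real.tanh (arg n w β h x i) ^ 2) * w i := by
    have hone : (n : ℝ) - ∑ i, Real.tanh (arg n w β h x i) ^ 2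
        = ∑ i, (1 - Real.tanh (arg n w β h x i) ^ 2) := by simp [sum_sub_distrib]
    rw [hone, mul_sum, mul_sum, ← sum_add_distrib]
    exact sum_congr rfl fun i _ => by rw [siteCoeff]; ring
  have hK := chiN_mul_rhatCoeff hχ hχt
  have hchi : chiN n w β h x = 1 - (1 / n : ℝ) * ∑ i, Real.tanh (arg n w β h x i) ^ 2
      + β / EW n w * ((1 / n : ℝ) * ∑ i, (1 - Real.tanh (arg n w β h x i) ^ 2) * w i) ^ 2
        / Gfun'' n w β h x := rfl
  rw [hsplit]
  set χ := chiN n w β h x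
  set Q := ∑ i, Real.tanh (arg n w β h x i) ^ 2
  set S := ∑ i, (1 - Real.tanh (arg n w β h x i) ^ 2) * w i
  calc (1 / n : ℝ) * (1 / χ * (n - Q) + rhatCoeff n w β h x * S)
      = 1 / χ * (1 - 1 / n * Q + χ * rhatCoeff n w β h x * (1 / n * S)) := by
        field_simp
    _ = 1 / χ * χ := by rw [hK, hchi]; ring
    _ = 1 := one_div_mul_cancel hχ.ne'

lemma error_sum_eq (σ : Fin n → Bool) :
    R3 n w β h x σ + R4 n w β h x + R5 n w β h x σ
        + Rhat3 n w β h x σ + Rhat4 n w β h x + Rhat5 n w β h x σ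
      = (1 / n : ℝ) * ∑ i, siteCoeff n w β h x i *
          (Real.tanh (arg n w β h x i) ^ 2 - spin (σ i) * Real.tanh (localField n w β h σ i)) := by
  simp only [R3, R4, R5, Rhat3, Rhat4, Rhat5, siteCoeff, rhatCoeff, localField, mul_sum,
    ← sum_add_distrib]
  exact sum_congr rfl fun i _ => by ring

lemma XnD_sq_add_mul_XnD_mul_XtilD (hχ : 0 < chiN n w β h x) (hχt : 0 < chiTil n w β h x)
    (τ : Fin n → Bool) (i : Fin n) (b : Bool) :
    XnD n w β h x τ i b ^ 2 + cconst n w β h x * (1 / Gfun'' n w β h x) *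
        (XnD n w β h x τ i b * XtilD n w β h x τ i b)
      = (spin (τ i) - spin b) ^ 2 * (siteCoeff n w β h x i / n) := by
  have hs := Real.sqrt_pos.mpr hχ
  have hst := Real.sqrt_pos.mpr hχt
  have hn : (0 : ℝ) < n := Nat.cast_pos.mpr (Fin.pos i)
  have hsn := Real.sqrt_pos.mpr hn
  rw [XnD, XtilD, siteCoeff, rhatCoeff, Real.sqrt_mul hχ.le]
  field_simp
  rw [Real.sq_sqrt (Nat.cast_nonneg n)]
  linear_combination (-((spin (τ i) - spin b) ^ 2 * n * Real.sqrt (chiTil n w β h x)))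
    * Real.sq_sqrt hχ.le

lemma half_mul_condAvg_eq (hn : 0 < n) (hw : ∀ i, 0 < w i) (hχ : 0 < chiN n w β h x)
    (hχt : 0 < chiTil n w β h x) (σ : Fin n → Bool) :
    (n : ℝ) / 2 * condAvg n w β h (fun τ i b =>
        XnD n w β h x τ i b ^ 2 + cconst n w β h x * (1 / Gfun'' n w β h x) *
          (XnD n w β h x τ i b * XtilD n w β h x τ i b)) σ
      = (1 / n : ℝ) * ∑ i, siteCoeff n w β h x i *
          (1 - spin (σ i) * Real.tanh (localField n w β h σ i)) := by
  have hn' : (n : ℝ) ≠ 0 := Nat.cast_ne_zero.mpr hn.ne'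
  have hL : ∑ j, w j ≠ 0 := (sum_pos (fun j _ => hw j) ⟨⟨0, hn⟩, mem_univ _⟩).ne'
  simp_rw [XnD_sq_add_mul_XnD_mul_XtilD hχ hχt]
  rw [condAvg_spin_sub_sq_mul hL, mul_sum, mul_sum, mul_sum]
  refine sum_congr rfl fun i _ => ?_
  field_simp

lemma one_sub_half_mul_condAvg_eq_neg_error_sum (hn : 0 < n) (hw : ∀ i, 0 < w i)
    (hχ : 0 < chiN n w β h x) (hχt : 0 < chiTil n w β h x) (σ : Fin n → Bool) :
    1 - (n : ℝ) / 2 * condAvg n w β h (fun τ i b =>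
        XnD n w β h x τ i b ^ 2 + cconst n w β h x * (1 / Gfun'' n w β h x) *
          (XnD n w β h x τ i b * XtilD n w β h x τ i b)) σ
      = -(R3 n w β h x σ + R4 n w β h x + R5 n w β h x σ
          + Rhat3 n w β h x σ + Rhat4 n w β h x + Rhat5 n w β h x σ) := by
  have hsplit : ∑ i, siteCoeff n w β h x i * (1 - spin (σ i) * Real.tanh (localField n w β h σ i))
      = ∑ i, siteCoeff n w β h x i * (1 - Real.tanh (arg n w β h x i) ^ 2)
        + ∑ i, siteCoeff n w β h x i *
          (Real.tanh (arg n w β h x i) ^ 2 - spin (σ i) * Real.tanh (localField n w β h σ i)) := by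
    rw [← sum_add_distrib]
    exact sum_congr rfl fun i _ => by ring
  rw [half_mul_condAvg_eq hn hw hχ hχt, error_sum_eq, hsplit]
  linear_combination -avg_siteCoeff_mul_one_sub_tanh_sq hn hχ hχt

end SteinTerm

theorem first_stein_term_bound_general (n : ℕ) (hn : 0 < n) (w : Fin n → ℝ) (hw : ∀ i, 0 < w i)
    (β h : ℝ) (hβ : 0 < β) (x : ℝ) (hG'' : 0 < Gfun'' n w β h x) :
    icwE n w β h (fun σ => |1 - (n : ℝ) / 2 * condAvg n w β h (fun τ i b =>
        XnD n w β h x τ i b ^ 2 + cconst n w β h x * (1 / Gfun'' n w β h x) *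
          (XnD n w β h x τ i b * XtilD n w β h x τ i b)) σ|)
      ≤ icwE n w β h (fun σ => |R3 n w β h x σ + R4 n w β h x + R5 n w β h x σ
          + Rhat3 n w β h x σ + Rhat4 n w β h x + Rhat5 n w β h x σ|) := by
  have hχ := chiN_pos hn hw hβ hG''
  have hχt := chiTil_pos hn hw hG''
  refine le_of_eq (congrArg (icwE n w β h) (funext fun σ => ?_))
  rw [one_sub_half_mul_condAvg_eq_neg_error_sum hn hw hχ hχt, abs_neg]

/-- **Bound on the first Stein term** for the ICW exchangeable pair, with `λ = 1/n` and
`σ² = 1/G_n''(x_n*)`; the conditional expectation given `F_n` is the average over the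
uniformly chosen coordinate `I` and the resampled spin `σ'_I`. -/
theorem first_stein_term_bound (n : ℕ) (hn : 0 < n) (w : Fin n → ℝ) (hw : ∀ i, 0 < w i)
    (β h : ℝ) (hβ : 0 < β) (x : ℝ) (hx : Gfun' n w β h x = 0) (hsign : SameSign h x)
    (hG'' : 0 < Gfun'' n w β h x) :
    icwE n w β h (fun σ => |1 - (n : ℝ) / 2 * condAvg n w β h (fun τ i b =>
        XnD n w β h x τ i b ^ 2 + cconst n w β h x * (1 / Gfun'' n w β h x) *
          (XnD n w β h x τ i b * XtilD n w β h x τ i b)) σ|)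
      ≤ icwE n w β h (fun σ => |R3 n w β h x σ + R4 n w β h x + R5 n w β h x σ
          + Rhat3 n w β h x σ + Rhat4 n w β h x + Rhat5 n w β h x σ|) :=
  first_stein_term_bound_general n hn w hw β h hβ x hG''

end ICW
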